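/- The function ψ is well defined and continuous on the closed rectangle R = [0,π] × [0,y_∞]; it vanishes identically on the topological boundary of R; it is C^∞ on the open rectangle (0,π) × (0,y_∞); for each k ≥ 0 the restriction of ψ to [0,π] × [y_k, y_{k+1}] is Lipschitz; and for every k ≥ 0 one has |ψ(x,y)| ≤ 2·h^k whenever x ∈ [0,π] and y_k ≤ y ≤ y_∞ (in particular ψ(·,y) → 0 uniformly as y → y_∞). -/

import Mathlib

open Real MeasureTheory Set Filter

noncomputable section

namespace StokesCounterexample

/-- `ySeq a k = Σ_{j=1}^k a^j` (so `ySeq a 0 = 0`). -/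
def ySeq (a : ℝ) (k : ℕ) : ℝ := ∑ j ∈ Finset.range k, a ^ (j + 1)

/-- `yInf a = Σ_{j=1}^∞ a^j = a / (1 - a)`. -/
def yInf (a : ℝ) : ℝ := a / (1 - a)

/-- `fSeq h l 0 = 0` and `fSeq h l k x = h^k · sin (x / l^k)` for `k ≥ 1`. -/
def fSeq (h l : ℝ) (k : ℕ) (x : ℝ) : ℝ :=
  if k = 0 then 0 else h ^ k * Real.sin (x / l ^ k)

open Classical in
/-- The interpolation `ψ(x,y) = (1 - φ_k(y))·f_k(x) + φ_k(y)·f_{k+1}(x)` for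
`y ∈ [y_k, y_{k+1})`, where `φ_k(y) = φ((y - y_k)/a^(k+1))`, extended by `0`
outside of `⋃_k [y_k, y_{k+1})` (in particular `ψ(x, y_∞) = 0`). -/
def psi (a h l : ℝ) (φ : ℝ → ℝ) (x y : ℝ) : ℝ :=
  if hk : ∃ k : ℕ, ySeq a k ≤ y ∧ y < ySeq a (k + 1) then
    (1 - φ ((y - ySeq a hk.choose) / a ^ (hk.choose + 1))) * fSeq h l hk.choose x
      + φ ((y - ySeq a hk.choose) / a ^ (hk.choose + 1)) * fSeq h l (hk.choose + 1) x
  else 0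

/-- The partial derivative of `ψ` in the first variable. -/
def psi₁ (a h l : ℝ) (φ : ℝ → ℝ) (x y : ℝ) : ℝ :=
  deriv (fun t => psi a h l φ t y) x

/-- The partial derivative of `ψ` in the second variable. -/
def psi₂ (a h l : ℝ) (φ : ℝ → ℝ) (x y : ℝ) : ℝ :=
  deriv (fun s => psi a h l φ x s) y

/-- The arc length `L(x,y) = ∫_0^x √(1 + (∂₁ψ(t,y))²) dt`. -/
def arc (a h l : ℝ) (φ : ℝ → ℝ) (x y : ℝ) : ℝ :=
  ∫ t in (0:ℝ)..x, Real.sqrt (1 + psi₁ a h l φ t y ^ 2)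

/-- The length `L(y) = L(π, y)` of the section of the graph of `ψ` at height `y`. -/
def len (a h l : ℝ) (φ : ℝ → ℝ) (y : ℝ) : ℝ := arc a h l φ π y

/-!
On the strip `y_k ≤ y < y_{k+1}`, `ψ` is the smooth interpolation `psiPiece k` between `f_k` and
`f_{k+1}`. Because `φ` is locally constant near `0` and near `1`, `ψ` coincides with `f_k(x)` on a
whole neighbourhood of each line `y = y_k`, so the pieces glue to a smooth function on
`0 ≤ y < y_∞`; Lipschitz continuity on a closed strip then follows from compactness. Being a
convex combination of `f_j` and `f_{j+1}` with `j ≥ k`, `ψ` is bounded by `h^k` above `y_k`, which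
gives continuity on the line `y = y_∞`. Finally `ψ` vanishes on `x = 0` and `x = π` because `1/λ`
is an integer, so that every `f_k` vanishes there.
-/

open Topology
open scoped ContDiff

section

variable {a h l : ℝ} {φ : ℝ → ℝ}

lemma ySeq_zero : ySeq a 0 = 0 := Finset.sum_range_zero _

lemma ySeq_succ (k : ℕ) : ySeq a (k + 1) = ySeq a k + a ^ (k + 1) :=
  Finset.sum_range_succ _ _

lemma ySeq_strictMono (ha0 : 0 < a) : StrictMono (ySeq a) :=
  strictMono_nat_of_lt_succ fun k => by
    rw [ySeq_succ]
    exact lt_add_of_pos_right _ (pow_pos ha0 _)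

lemma ySeq_nonneg (ha0 : 0 < a) (k : ℕ) : 0 ≤ ySeq a k :=
  ySeq_zero (a := a) ▸ (ySeq_strictMono ha0).monotone k.zero_le

lemma hasSum_pow_succ_yInf (ha0 : 0 ≤ a) (ha1 : a < 1) :
    HasSum (fun j : ℕ => a ^ (j + 1)) (yInf a) := by
  simpa [yInf, div_eq_mul_inv, pow_succ'] using (hasSum_geometric_of_lt_one ha0 ha1).mul_left a

lemma tendsto_ySeq_yInf (ha0 : 0 ≤ a) (ha1 : a < 1) :
    Tendsto (ySeq a) atTop (𝓝 (yInf a)) :=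
  (hasSum_pow_succ_yInf ha0 ha1).tendsto_sum_nat

lemma ySeq_lt_yInf (ha0 : 0 < a) (ha1 : a < 1) (k : ℕ) : ySeq a k < yInf a :=
  (ySeq_strictMono ha0 k.lt_succ_self).trans_le
    ((ySeq_strictMono ha0).monotone.ge_of_tendsto (tendsto_ySeq_yInf ha0.le ha1) _)

lemma exists_mem_Ico_ySeq (ha0 : 0 < a) (ha1 : a < 1) {y : ℝ} (hy0 : 0 ≤ y)
    (hy : y < yInf a) : ∃ k, y ∈ Ico (ySeq a k) (ySeq a (k + 1)) := by
  obtain ⟨n, hn⟩ := ((tendsto_ySeq_yInf ha0.le ha1).eventually (eventually_gt_nhds hy)).exists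
  induction n with
  | zero => exact absurd hn (ySeq_zero (a := a) ▸ hy0.not_gt)
  | succ n ih =>
    by_cases hyn : y < ySeq a n
    exacts [ih hyn, ⟨n, not_lt.1 hyn, hn⟩]

lemma eq_of_mem_Ico_ySeq (ha0 : 0 < a) {y : ℝ} {j k : ℕ}
    (hj : y ∈ Ico (ySeq a j) (ySeq a (j + 1))) (hk : y ∈ Ico (ySeq a k) (ySeq a (k + 1))) :
    j = k := by
  have hjk := (ySeq_strictMono ha0).lt_iff_lt.1 (hj.1.trans_lt hk.2)
  have hkj := (ySeq_strictMono ha0).lt_iff_lt.1 (hk.1.trans_lt hj.2)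
  omega

lemma fSeq_zero_left (k : ℕ) : fSeq h l k 0 = 0 := by
  simp [fSeq]

lemma fSeq_one_div_natCast_pi (N k : ℕ) : fSeq h (1 / N) k π = 0 := by
  simpa [fSeq, mul_comm π] using fun _ => Or.inr (Real.sin_nat_mul_pi (N ^ k))

lemma abs_fSeq_le (hh0 : 0 ≤ h) (k : ℕ) (x : ℝ) : |fSeq h l k x| ≤ h ^ k := by
  unfold fSeq
  split_ifs
  · simpa using pow_nonneg hh0 k
  · rw [abs_mul, abs_of_nonneg (pow_nonneg hh0 k)]
    exact mul_le_of_le_one_right (pow_nonneg hh0 k) (abs_sin_le_one _)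

lemma contDiff_fSeq (k : ℕ) : ContDiff ℝ ∞ (fSeq h l k) := by
  unfold fSeq
  split_ifs <;> fun_prop

def phiSeq (a : ℝ) (φ : ℝ → ℝ) (k : ℕ) (y : ℝ) : ℝ := φ ((y - ySeq a k) / a ^ (k + 1))

def psiPiece (a h l : ℝ) (φ : ℝ → ℝ) (k : ℕ) (p : ℝ × ℝ) : ℝ :=
  (1 - phiSeq a φ k p.2) * fSeq h l k p.1 + phiSeq a φ k p.2 * fSeq h l (k + 1) p.1

lemma contDiff_psiPiece (hφ : ContDiff ℝ ∞ φ) (k : ℕ) : ContDiff ℝ ∞ (psiPiece a h l φ k) := by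
  have hf := contDiff_fSeq (h := h) (l := l)
  unfold psiPiece phiSeq
  fun_prop

lemma abs_psiPiece_le (hh0 : 0 ≤ h) (hh1 : h ≤ 1) (hφ01 : ∀ t, φ t ∈ Icc (0 : ℝ) 1) (k : ℕ)
    (p : ℝ × ℝ) : |psiPiece a h l φ k p| ≤ h ^ k := by
  obtain ⟨ht0, ht1⟩ := hφ01 ((p.2 - ySeq a k) / a ^ (k + 1))
  have hfk := abs_fSeq_le (l := l) hh0 k p.1
  have hfk' := (abs_fSeq_le (l := l) hh0 (k + 1) p.1).trans (pow_le_pow_of_le_one hh0 hh1 k.le_succ)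
  simpa [psiPiece, phiSeq, Real.dist_eq, smul_eq_mul] using
    convex_closedBall (0 : ℝ) (h ^ k) (by simpa using hfk) (by simpa using hfk')
      (sub_nonneg.2 ht1) ht0 (sub_add_cancel 1 _)

lemma phiSeq_eventually_eq_zero (hφ0 : ∀ᶠ t in 𝓝 0, φ t = 0) (k : ℕ) :
    ∀ᶠ y in 𝓝 (ySeq a k), phiSeq a φ k y = 0 := by
  have : Tendsto (fun y => (y - ySeq a k) / a ^ (k + 1)) (𝓝 (ySeq a k)) (𝓝 0) :=
    ((continuous_id.sub continuous_const).div_const _).tendsto' _ _ (by simp)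
  exact this.eventually hφ0

lemma phiSeq_eventually_eq_one (ha0 : a ≠ 0) (hφ1 : ∀ᶠ t in 𝓝 1, φ t = 1) (k : ℕ) :
    ∀ᶠ y in 𝓝 (ySeq a (k + 1)), phiSeq a φ k y = 1 := by
  have : Tendsto (fun y => (y - ySeq a k) / a ^ (k + 1)) (𝓝 (ySeq a (k + 1))) (𝓝 1) :=
    ((continuous_id.sub continuous_const).div_const _).tendsto' _ _
      (by simp [ySeq_succ, pow_ne_zero _ ha0])
  exact this.eventually hφ1

lemma psiPiece_eventuallyEq_fSeq (hφ0 : ∀ᶠ t in 𝓝 0, φ t = 0) (k : ℕ) (x : ℝ) :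
    psiPiece a h l φ k =ᶠ[𝓝 (x, ySeq a k)] fun q => fSeq h l k q.1 := by
  filter_upwards [(continuous_snd.tendsto _).eventually (phiSeq_eventually_eq_zero hφ0 k)]
    with q hq
  simp [psiPiece, hq]

lemma psiPiece_eventuallyEq_fSeq_succ (ha0 : a ≠ 0) (hφ1 : ∀ᶠ t in 𝓝 1, φ t = 1) (k : ℕ)
    (x : ℝ) : psiPiece a h l φ k =ᶠ[𝓝 (x, ySeq a (k + 1))] fun q => fSeq h l (k + 1) q.1 := by
  filter_upwards [(continuous_snd.tendsto _).eventually (phiSeq_eventually_eq_one ha0 hφ1 k)]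
    with q hq
  simp [psiPiece, hq]

lemma psi_eq_psiPiece (ha0 : 0 < a) {k : ℕ} {x y : ℝ} (hk : y ∈ Ico (ySeq a k) (ySeq a (k + 1))) :
    psi a h l φ x y = psiPiece a h l φ k (x, y) := by
  have hex : ∃ j : ℕ, ySeq a j ≤ y ∧ y < ySeq a (j + 1) := ⟨k, hk⟩
  rw [psi, dif_pos hex, eq_of_mem_Ico_ySeq ha0 hex.choose_spec hk]
  rfl

lemma psi_eq_zero_of_neg (ha0 : 0 < a) {x y : ℝ} (hy : y < 0) : psi a h l φ x y = 0 :=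
  dif_neg fun ⟨k, hk, _⟩ => (hy.trans_le (ySeq_nonneg ha0 k)).not_ge hk

lemma psi_eq_zero_of_yInf_le (ha0 : 0 < a) (ha1 : a < 1) {x y : ℝ} (hy : yInf a ≤ y) :
    psi a h l φ x y = 0 :=
  dif_neg fun ⟨k, _, hk⟩ => (hk.trans (ySeq_lt_yInf ha0 ha1 (k + 1))).not_ge hy

lemma psi_eq_zero_of_fSeq_eq_zero {x : ℝ} (hx : ∀ k, fSeq h l k x = 0) (y : ℝ) :
    psi a h l φ x y = 0 := by
  unfold psi
  split_ifs <;> simp [hx]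

lemma abs_psi_le (ha0 : 0 < a) (hh0 : 0 ≤ h) (hh1 : h ≤ 1) (hφ01 : ∀ t, φ t ∈ Icc (0 : ℝ) 1)
    {k : ℕ} {y : ℝ} (hy : ySeq a k ≤ y) (x : ℝ) : |psi a h l φ x y| ≤ h ^ k := by
  by_cases hex : ∃ j : ℕ, ySeq a j ≤ y ∧ y < ySeq a (j + 1)
  · obtain ⟨j, hj⟩ := hex
    have hkj : k ≤ j := Nat.lt_succ_iff.1 <| (ySeq_strictMono ha0).lt_iff_lt.1 (hy.trans_lt hj.2)
    rw [psi_eq_psiPiece ha0 hj]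
    exact (abs_psiPiece_le hh0 hh1 hφ01 j _).trans (pow_le_pow_of_le_one hh0 hh1 hkj)
  · rw [psi, dif_neg hex, abs_zero]
    positivity

lemma psi_eventuallyEq_fSeq (ha0 : 0 < a) (hφ0 : ∀ᶠ t in 𝓝 0, φ t = 0)
    (hφ1 : ∀ᶠ t in 𝓝 1, φ t = 1) (k : ℕ) (x : ℝ) :
    (fun q : ℝ × ℝ => psi a h l φ q.1 q.2) =ᶠ[𝓝 (x, ySeq a k)] fun q => fSeq h l k q.1 := by
  have hsnd : Tendsto Prod.snd (𝓝 (x, ySeq a k)) (𝓝 (ySeq a k)) := continuous_snd.tendsto _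
  have above : ∀ᶠ q : ℝ × ℝ in 𝓝 (x, ySeq a k),
      ySeq a k ≤ q.2 → psi a h l φ q.1 q.2 = fSeq h l k q.1 := by
    filter_upwards [psiPiece_eventuallyEq_fSeq hφ0 k x,
      hsnd.eventually (eventually_lt_nhds (ySeq_strictMono ha0 k.lt_succ_self))] with q hq hlt hle
    rw [psi_eq_psiPiece ha0 ⟨hle, hlt⟩, hq]
  have below : ∀ᶠ q : ℝ × ℝ in 𝓝 (x, ySeq a k),
      q.2 < ySeq a k → psi a h l φ q.1 q.2 = fSeq h l k q.1 := by
    cases k with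
    | zero =>
      refine .of_forall fun q hq => ?_
      rw [psi_eq_zero_of_neg ha0 (ySeq_zero (a := a) ▸ hq)]
      simp [fSeq]
    | succ j =>
      filter_upwards [psiPiece_eventuallyEq_fSeq_succ ha0.ne' hφ1 j x,
        hsnd.eventually (eventually_gt_nhds (ySeq_strictMono ha0 j.lt_succ_self))]
        with q hq hgt hlt
      rw [psi_eq_psiPiece ha0 ⟨hgt.le, hlt⟩, hq]
  filter_upwards [above, below] with q hab hbe
  exact (le_or_gt (ySeq a k) q.2).elim hab hbe

lemma contDiffAt_psi (ha0 : 0 < a) (ha1 : a < 1) (hφ : ContDiff ℝ ∞ φ)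
    (hφ0 : ∀ᶠ t in 𝓝 0, φ t = 0) (hφ1 : ∀ᶠ t in 𝓝 1, φ t = 1) {p : ℝ × ℝ} (hp0 : 0 ≤ p.2)
    (hp : p.2 < yInf a) : ContDiffAt ℝ ∞ (fun q : ℝ × ℝ => psi a h l φ q.1 q.2) p := by
  obtain ⟨k, hk⟩ := exists_mem_Ico_ySeq ha0 ha1 hp0 hp
  rcases hk.1.eq_or_lt with hbot | hint
  · obtain ⟨x, y⟩ := p
    obtain rfl : y = ySeq a k := hbot.symm
    exact ((contDiff_fSeq k).comp contDiff_fst).contDiffAt.congr_of_eventuallyEq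
      (psi_eventuallyEq_fSeq ha0 hφ0 hφ1 k x)
  · refine (contDiff_psiPiece (a := a) (h := h) (l := l) hφ k).contDiffAt.congr_of_eventuallyEq ?_
    filter_upwards [(continuous_snd.tendsto p).eventually (isOpen_Ioo.mem_nhds ⟨hint, hk.2⟩)]
      with q hq
    exact psi_eq_psiPiece ha0 (Ioo_subset_Ico_self hq)

lemma continuousAt_psi_yInf (ha0 : 0 < a) (ha1 : a < 1) (hh0 : 0 ≤ h) (hh1 : h < 1)
    (hφ01 : ∀ t, φ t ∈ Icc (0 : ℝ) 1) (x : ℝ) :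
    ContinuousAt (fun q : ℝ × ℝ => psi a h l φ q.1 q.2) (x, yInf a) := by
  rw [ContinuousAt, psi_eq_zero_of_yInf_le ha0 ha1 le_rfl, Metric.tendsto_nhds]
  intro ε hε
  obtain ⟨k, hk⟩ := exists_pow_lt_of_lt_one hε hh1
  filter_upwards [(continuous_snd.tendsto _).eventually
    (eventually_gt_nhds (ySeq_lt_yInf ha0 ha1 k))] with q hq
  rw [Real.dist_eq, sub_zero]
  exact (abs_psi_le ha0 hh0 hh1.le hφ01 hq.le q.1).trans_lt hk

lemma continuousOn_psi (ha0 : 0 < a) (ha1 : a < 1) (hh0 : 0 ≤ h) (hh1 : h < 1)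
    (hφ : ContDiff ℝ ∞ φ) (hφ01 : ∀ t, φ t ∈ Icc (0 : ℝ) 1) (hφ0 : ∀ᶠ t in 𝓝 0, φ t = 0)
    (hφ1 : ∀ᶠ t in 𝓝 1, φ t = 1) {s : Set ℝ} :
    ContinuousOn (fun p : ℝ × ℝ => psi a h l φ p.1 p.2) (s ×ˢ Icc 0 (yInf a)) := by
  rintro ⟨x, y⟩ ⟨-, hy0, hy⟩
  refine ContinuousAt.continuousWithinAt ?_
  rcases hy.lt_or_eq with hlt | rfl
  · exact (contDiffAt_psi ha0 ha1 hφ hφ0 hφ1 hy0 hlt).continuousAt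
  · exact continuousAt_psi_yInf ha0 ha1 hh0 hh1 hφ01 x

lemma psi_eq_zero_of_mem_frontier (ha0 : 0 < a) (ha1 : a < 1) (hφ0 : ∀ᶠ t in 𝓝 0, φ t = 0)
    (hφ1 : ∀ᶠ t in 𝓝 1, φ t = 1) (N : ℕ) {p : ℝ × ℝ}
    (hp : p ∈ frontier (Icc 0 π ×ˢ Icc 0 (yInf a))) : psi a h (1 / N) φ p.1 p.2 = 0 := by
  have hyInf : 0 ≤ yInf a := ySeq_zero (a := a) ▸ (ySeq_lt_yInf ha0 ha1 0).le
  rw [frontier_prod_eq, closure_Icc, closure_Icc, frontier_Icc pi_nonneg, frontier_Icc hyInf]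
    at hp
  obtain ⟨x, y⟩ := p
  rcases hp with ⟨-, rfl | rfl⟩ | ⟨rfl | rfl, -⟩
  · simpa [ySeq_zero, fSeq] using (psi_eventuallyEq_fSeq ha0 hφ0 hφ1 0 x).eq_of_nhds
  · exact psi_eq_zero_of_yInf_le ha0 ha1 le_rfl
  · exact psi_eq_zero_of_fSeq_eq_zero fSeq_zero_left y
  · exact psi_eq_zero_of_fSeq_eq_zero (fSeq_one_div_natCast_pi N) y

lemma exists_lipschitzOnWith_psi (ha0 : 0 < a) (ha1 : a < 1) (hφ : ContDiff ℝ ∞ φ)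
    (hφ0 : ∀ᶠ t in 𝓝 0, φ t = 0) (hφ1 : ∀ᶠ t in 𝓝 1, φ t = 1) {s : Set ℝ} (hs : IsCompact s)
    (hs' : Convex ℝ s) (k : ℕ) :
    ∃ K, LipschitzOnWith K (fun p : ℝ × ℝ => psi a h l φ p.1 p.2)
      (s ×ˢ Icc (ySeq a k) (ySeq a (k + 1))) := by
  refine ContDiffOn.exists_lipschitzOnWith (n := ∞) (fun p hp => ?_) (by simp)
    (hs'.prod (convex_Icc _ _)) (hs.prod isCompact_Icc)
  exact (contDiffAt_psi ha0 ha1 hφ hφ0 hφ1 ((ySeq_nonneg ha0 k).trans hp.2.1)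
    (hp.2.2.trans_lt (ySeq_lt_yInf ha0 ha1 _))).contDiffWithinAt

end

theorem psi_basic_properties_general (a h l : ℝ) (ha0 : 0 < a) (ha1 : a < 1) (hh0 : 0 < h) (hh1 : h < 1)
    (hlN : ∃ N : ℕ, 0 < N ∧ l = 1 / N)
    (φ : ℝ → ℝ) (hφsmooth : ContDiff ℝ (⊤ : ℕ∞) φ)
    (hφ01 : ∀ t, φ t ∈ Set.Icc (0:ℝ) 1)
    (hφ0 : ∃ ε > 0, ∀ t < ε, φ t = 0) (hφ1 : ∃ ε > 0, ∀ t > 1 - ε, φ t = 1) :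
    ContinuousOn (fun p : ℝ × ℝ => psi a h l φ p.1 p.2) (Icc 0 π ×ˢ Icc 0 (yInf a)) ∧
    (∀ p ∈ frontier (Icc 0 π ×ˢ Icc 0 (yInf a) : Set (ℝ × ℝ)), psi a h l φ p.1 p.2 = 0) ∧
    ContDiffOn ℝ (⊤ : ℕ∞) (fun p : ℝ × ℝ => psi a h l φ p.1 p.2)
      (Ioo 0 π ×ˢ Ioo 0 (yInf a)) ∧
    (∀ k : ℕ, ∃ K : NNReal, LipschitzOnWith K (fun p : ℝ × ℝ => psi a h l φ p.1 p.2)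
      (Icc 0 π ×ˢ Icc (ySeq a k) (ySeq a (k + 1)))) ∧
    (∀ k : ℕ, ∀ x ∈ Icc (0:ℝ) π, ∀ y : ℝ, ySeq a k ≤ y → y ≤ yInf a →
      |psi a h l φ x y| ≤ 2 * h ^ k) := by
  obtain ⟨N, -, rfl⟩ := hlN
  have hφ0' : ∀ᶠ t in 𝓝 0, φ t = 0 := by
    obtain ⟨ε, hε, hφε⟩ := hφ0
    exact (eventually_lt_nhds hε).mono hφε
  have hφ1' : ∀ᶠ t in 𝓝 1, φ t = 1 := by
    obtain ⟨ε, hε, hφε⟩ := hφ1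
    exact (eventually_gt_nhds (sub_lt_self 1 hε)).mono hφε
  refine ⟨continuousOn_psi ha0 ha1 hh0.le hh1 hφsmooth hφ01 hφ0' hφ1',
    fun p hp => psi_eq_zero_of_mem_frontier ha0 ha1 hφ0' hφ1' N hp,
    fun p hp => (contDiffAt_psi ha0 ha1 hφsmooth hφ0' hφ1' hp.2.1.le hp.2.2).contDiffWithinAt,
    exists_lipschitzOnWith_psi ha0 ha1 hφsmooth hφ0' hφ1' isCompact_Icc (convex_Icc 0 π),
    fun k x _ y hy _ => ?_⟩
  have hbound := abs_psi_le (l := 1 / N) ha0 hh0.le hh1.le hφ01 hy x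
  linarith [pow_pos hh0 k]

/-- Basic properties of `ψ`: continuity on the closed rectangle, vanishing on its
topological boundary, smoothness on the open rectangle, Lipschitz continuity on each
closed strip, and the uniform bound `|ψ(x,y)| ≤ 2 h^k` for `y ∈ [y_k, y_∞]`. -/
theorem psi_basic_properties (a h l : ℝ) (ha0 : 0 < a) (ha1 : a < 1) (hh0 : 0 < h) (hh1 : h < 1)
    (hl0 : 0 < l) (hl1 : l < 1) (hlN : ∃ N : ℕ, 0 < N ∧ l = 1 / N)
    (φ : ℝ → ℝ) (hφsmooth : ContDiff ℝ (⊤ : ℕ∞) φ) (hφmono : Monotone φ)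
    (hφ01 : ∀ t, φ t ∈ Set.Icc (0:ℝ) 1)
    (hφd0 : ∀ t, 0 ≤ deriv φ t) (hφd2 : ∀ t, deriv φ t ≤ 2)
    (hφ0 : ∃ ε > 0, ∀ t < ε, φ t = 0) (hφ1 : ∃ ε > 0, ∀ t > 1 - ε, φ t = 1) :
    ContinuousOn (fun p : ℝ × ℝ => psi a h l φ p.1 p.2) (Icc 0 π ×ˢ Icc 0 (yInf a)) ∧
    (∀ p ∈ frontier (Icc 0 π ×ˢ Icc 0 (yInf a) : Set (ℝ × ℝ)), psi a h l φ p.1 p.2 = 0) ∧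
    ContDiffOn ℝ (⊤ : ℕ∞) (fun p : ℝ × ℝ => psi a h l φ p.1 p.2)
      (Ioo 0 π ×ˢ Ioo 0 (yInf a)) ∧
    (∀ k : ℕ, ∃ K : NNReal, LipschitzOnWith K (fun p : ℝ × ℝ => psi a h l φ p.1 p.2)
      (Icc 0 π ×ˢ Icc (ySeq a k) (ySeq a (k + 1)))) ∧
    (∀ k : ℕ, ∀ x ∈ Icc (0:ℝ) π, ∀ y : ℝ, ySeq a k ≤ y → y ≤ yInf a →
      |psi a h l φ x y| ≤ 2 * h ^ k) :=
  psi_basic_properties_general a h l ha0 ha1 hh0 hh1 hlN φ hφsmooth hφ01 hφ0 hφ1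

end StokesCounterexample
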